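/- arXiv:2109.06993 — 5 statements merged into one kernel-verified Lean document; each statement's English description precedes it below -/
import Mathlib

section
/- Let G be a finite group with identity e and let H be a subgroup of G. Then H is a perfect code of G (i.e., there exists an inverse-closed subset S ⊆ G \ {e} such that H is an independent set of the Cayley graph Cay(G,S) and every element of G \ H has exactly one neighbor in H) if and only if H admits a left transversal T in G that is inverse-closed (T = T⁻¹). -/
/-- `C` is a perfect code of the Cayley graph `Cay(G, S)`:
`C` is independent and every vertex outside `C` has exactly one neighbor in `C`,
where `g` and `h` are adjacent iff `h * g⁻¹ ∈ S`. -/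
def IsPerfectCode {G : Type*} [Group G] (S : Set G) (C : Set G) : Prop :=
  (∀ c ∈ C, ∀ c' ∈ C, c ≠ c' → c' * c⁻¹ ∉ S) ∧
  ∀ g ∉ C, ∃! c, c ∈ C ∧ c * g⁻¹ ∈ S

/-!
For a subgroup `H`, a connection set `S` with `1 ∉ S` and `S = S⁻¹` makes `H` a perfect code
exactly when `S` avoids `H` and meets every left coset `gH ≠ H` in exactly one element: the
neighbours `c ∈ H` of `g` correspond to the elements `g * c⁻¹ ∈ S ∩ gH`. So `S ∪ {1}` is an
inverse-closed left transversal, and conversely an inverse-closed left transversal `T` gives the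
connection set `T \ H`.
-/

namespace Subgroup

variable {G : Type*} [Group G] (H : Subgroup G)

lemma existsUnique_mem_mul_inv_mem_iff {S : Set G} (hS : ∀ s ∈ S, s⁻¹ ∈ S) (g : G) :
    (∃! c, c ∈ H ∧ c * g⁻¹ ∈ S) ↔ ∃! t, t ∈ S ∧ g⁻¹ * t ∈ H := by
  have hS_iff : ∀ x, x⁻¹ ∈ S ↔ x ∈ S := fun x =>
    ⟨fun h => by simpa using hS _ h, hS x⟩
  refine ((Equiv.inv G).trans (Equiv.mulLeft g)).existsUnique_congr fun c => ?_
  simp [← hS_iff (c * g⁻¹), and_comm]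

lemma independent_iff_forall_notMem {S : Set G} (hS1 : (1 : G) ∉ S) :
    (∀ c ∈ (H : Set G), ∀ c' ∈ (H : Set G), c ≠ c' → c' * c⁻¹ ∉ S) ↔
      ∀ s ∈ S, s ∉ H := by
  constructor
  · intro hind s hs hsH
    exact hind 1 H.one_mem s hsH (fun h => hS1 (h ▸ hs)) (by simpa using hs)
  · intro hSH c hc c' hc' _ hmem
    exact hSH _ hmem (H.mul_mem hc' (H.inv_mem hc))

lemma isPerfectCode_iff {S : Set G} (hS : ∀ s ∈ S, s⁻¹ ∈ S) (hS1 : (1 : G) ∉ S) :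
    IsPerfectCode S (H : Set G) ↔
      (∀ s ∈ S, s ∉ H) ∧ ∀ g ∉ H, ∃! t, t ∈ S ∧ g⁻¹ * t ∈ H := by
  unfold IsPerfectCode
  rw [H.independent_iff_forall_notMem hS1]
  simp only [SetLike.mem_coe, H.existsUnique_mem_mul_inv_mem_iff hS]

lemma existsUnique_mem_diff_iff (T : Set G) {g : G} (hg : g ∉ H) :
    (∃! t, t ∈ T ∧ g⁻¹ * t ∈ H) ↔ ∃! t, t ∈ T \ H ∧ g⁻¹ * t ∈ H := by
  refine existsUnique_congr fun t => ⟨fun ⟨htT, htH⟩ => ⟨⟨htT, fun ht => hg ?_⟩, htH⟩,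
    fun ⟨⟨htT, _⟩, htH⟩ => ⟨htT, htH⟩⟩
  simpa using H.mul_mem htH (H.inv_mem ht)

lemma existsUnique_mem_insert_one {S : Set G} (hSH : ∀ s ∈ S, s ∉ H)
    (hcover : ∀ g ∉ H, ∃! t, t ∈ S ∧ g⁻¹ * t ∈ H) (g : G) :
    ∃! t, t ∈ insert 1 S ∧ g⁻¹ * t ∈ H := by
  by_cases hg : g ∈ H
  · refine ⟨1, ⟨Set.mem_insert _ _, by simpa using hg⟩, ?_⟩
    rintro t ⟨rfl | ht, htH⟩
    · rfl
    · exact absurd (by simpa using H.mul_mem hg htH) (hSH t ht)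
  · have hdiff : insert 1 S \ H = S := by
      ext t
      by_cases ht : t ∈ S
      · simp [ht, hSH t ht]
      · simp [ht, H.one_mem]
    rw [H.existsUnique_mem_diff_iff _ hg, hdiff]
    exact hcover g hg

end Subgroup

theorem stmt0_general {G : Type*} [Group G] (H : Subgroup G) :
    (∃ S : Set G, (∀ s ∈ S, s⁻¹ ∈ S) ∧ (1 : G) ∉ S ∧
        IsPerfectCode S (H : Set G)) ↔
    (∃ T : Set G, (∀ t ∈ T, t⁻¹ ∈ T) ∧ ∀ g : G, ∃! t, t ∈ T ∧ g⁻¹ * t ∈ H) := by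
  constructor
  · rintro ⟨S, hS, hS1, hcode⟩
    obtain ⟨hSH, hcover⟩ := (H.isPerfectCode_iff hS hS1).1 hcode
    refine ⟨insert 1 S, ?_, H.existsUnique_mem_insert_one hSH hcover⟩
    rintro t (rfl | ht)
    exacts [by simp, Or.inr (hS t ht)]
  · rintro ⟨T, hT, htrans⟩
    have hinv : ∀ t ∈ T \ H, t⁻¹ ∈ T \ H := fun t ⟨htT, htH⟩ =>
      ⟨hT t htT, by simpa using htH⟩
    have hone : (1 : G) ∉ T \ H := fun h => h.2 H.one_mem
    refine ⟨T \ H, hinv, hone, (H.isPerfectCode_iff hinv hone).2 ⟨fun s hs => hs.2, ?_⟩⟩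
    exact fun g hg => (H.existsUnique_mem_diff_iff T hg).1 (htrans g)

/-- A subgroup `H` of a finite group `G` is a perfect code of `G` if and only if
`H` admits an inverse-closed left transversal in `G`. -/
theorem stmt0 {G : Type*} [Group G] [Fintype G] (H : Subgroup G) :
    (∃ S : Set G, (∀ s ∈ S, s⁻¹ ∈ S) ∧ (1 : G) ∉ S ∧
        IsPerfectCode S (H : Set G)) ↔
    (∃ T : Set G, (∀ t ∈ T, t⁻¹ ∈ T) ∧ ∀ g : G, ∃! t, t ∈ T ∧ g⁻¹ * t ∈ H) :=
  stmt0_general H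
end

section
/- Let G be a finite group and H a normal subgroup of G. Then H is a perfect code of G if and only if for every g ∈ G with g² ∈ H there exists h ∈ H with (gh)² = e. -/
theorem isPerfectCode_subgroup_iff {G : Type*} [Group G] (H : Subgroup G) {S : Set G}
    (hS1 : (1 : G) ∉ S) :
    IsPerfectCode S H ↔ (∀ s ∈ S, s ∉ H) ∧ ∀ g ∉ H, ∃! s, s ∈ S ∧ s * g ∈ H := by
  have independent_iff : (∀ c ∈ H, ∀ c' ∈ H, c ≠ c' → c' * c⁻¹ ∉ S) ↔ ∀ s ∈ S, s ∉ H := by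
    refine ⟨fun hind s hsS hsH => ?_, fun hdisj c hc c' hc' _ hS => ?_⟩
    · refine hind 1 H.one_mem s hsH (fun h => hS1 (h ▸ hsS)) ?_
      rwa [inv_one, mul_one]
    · exact hdisj _ hS (H.mul_mem hc' (H.inv_mem hc))
  have dominating_iff (g : G) : (∃! c, c ∈ H ∧ c * g⁻¹ ∈ S) ↔ ∃! s, s ∈ S ∧ s * g ∈ H := by
    rw [← (Equiv.mulRight g).existsUnique_congr_right]
    simp only [Equiv.coe_mulRight, mul_inv_cancel_right, and_comm]
  simp only [IsPerfectCode, independent_iff, SetLike.mem_coe, dominating_iff]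

theorem exists_inv_section {G Q : Type*} [Group G] [Group Q] (f : G →* Q)
    (hf : Function.Surjective f) (hlift : ∀ q : Q, q * q = 1 → ∃ t, f t = q ∧ t * t = 1) :
    ∃ r : Q → G, (∀ q, f (r q) = q) ∧ ∀ q, r q⁻¹ = (r q)⁻¹ := by
  classical
  have hs : ∀ q : Q, ∃ t, f t = q ∧ (q * q = 1 → t * t = 1) := fun q =>
    if hq : q * q = 1 then (hlift q hq).imp fun _ ht => ⟨ht.1, fun _ => ht.2⟩
    else (hf q).imp fun _ ht => ⟨ht, fun h => absurd h hq⟩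
  choose s hs_lift hs_invol using hs
  -- An injection into a linear order decides which of `q`, `q⁻¹` gets its lift inverted.
  let ι := embeddingToCardinal (α := Q)
  refine ⟨fun q => if ι q⁻¹ < ι q then (s q⁻¹)⁻¹ else s q, fun q => ?_, fun q => ?_⟩
  · dsimp only
    split_ifs <;> simp [hs_lift]
  · simp only [inv_inv]
    rcases lt_trichotomy (ι q) (ι q⁻¹) with hlt | heq | hgt
    · simp [hlt, hlt.not_gt]
    · have hqq : q⁻¹ = q := (ι.injective heq).symm
      have hq : q * q = 1 := by rw [← mul_inv_cancel q, hqq]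
      simp only [hqq, lt_irrefl, if_false]
      exact (inv_eq_of_mul_eq_one_left (hs_invol q hq)).symm
    · simp [hgt, hgt.not_gt]

theorem stmt1_general {G : Type*} [Group G] (H : Subgroup G) [H.Normal] :
    (∃ S : Set G, (∀ s ∈ S, s⁻¹ ∈ S) ∧ (1 : G) ∉ S ∧
        IsPerfectCode S (H : Set G)) ↔
    (∀ g : G, g * g ∈ H → ∃ h ∈ H, (g * h) * (g * h) = 1) := by
  constructor
  · rintro ⟨S, hS_inv, hS1, hcode⟩ g hgg
    by_cases hg : g ∈ H
    · exact ⟨g⁻¹, H.inv_mem hg, by simp⟩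
    obtain ⟨s, ⟨hsS, hsg⟩, hs_unique⟩ := ((isPerfectCode_subgroup_iff H hS1).1 hcode).2 g hg
    have hs_coset : (s : G ⧸ H) = g := by
      rw [← QuotientGroup.eq_one_iff, QuotientGroup.mk_mul] at hsg hgg
      exact mul_right_cancel (hsg.trans hgg.symm)
    have hs_self_inv : s⁻¹ = s :=
      hs_unique _ ⟨hS_inv s hsS, by simpa using QuotientGroup.eq.1 hs_coset⟩
    refine ⟨g⁻¹ * s, QuotientGroup.eq.1 hs_coset.symm, ?_⟩
    rw [mul_inv_cancel_left]
    nth_rewrite 1 [← hs_self_inv]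
    exact inv_mul_cancel s
  · intro hyp
    have hlift (q : G ⧸ H) (hq : q * q = 1) : ∃ t, QuotientGroup.mk' H t = q ∧ t * t = 1 := by
      obtain ⟨g, rfl⟩ := QuotientGroup.mk_surjective q
      obtain ⟨h, hh, hgh⟩ := hyp g ((QuotientGroup.eq_one_iff _).1 hq)
      exact ⟨g * h, by simp [(QuotientGroup.eq_one_iff h).2 hh], hgh⟩
    obtain ⟨r, hr_mk, hr_inv⟩ :=
      exists_inv_section (QuotientGroup.mk' H) (QuotientGroup.mk'_surjective H) hlift
    simp only [QuotientGroup.mk'_apply] at hr_mk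
    have hS1 : (1 : G) ∉ r '' {q | q ≠ 1} := by
      rintro ⟨q, hq, hr1⟩
      exact hq (by rw [← hr_mk q, hr1, QuotientGroup.mk_one])
    refine ⟨r '' {q | q ≠ 1}, ?_, hS1, (isPerfectCode_subgroup_iff H hS1).2 ⟨?_, ?_⟩⟩
    · rintro _ ⟨q, hq, rfl⟩
      exact ⟨q⁻¹, inv_ne_one.2 hq, hr_inv q⟩
    · rintro _ ⟨q, hq, rfl⟩ hH
      exact hq (by rw [← hr_mk q]; exact (QuotientGroup.eq_one_iff _).2 hH)
    · intro g hg
      have hg_ne : ((g : G ⧸ H))⁻¹ ≠ 1 := inv_ne_one.2 ((QuotientGroup.eq_one_iff g).not.2 hg)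
      refine ⟨r (g : G ⧸ H)⁻¹, ⟨⟨_, hg_ne, rfl⟩, ?_⟩, ?_⟩
      · rw [← QuotientGroup.eq_one_iff, QuotientGroup.mk_mul, hr_mk, inv_mul_cancel]
      · rintro _ ⟨⟨q, -, rfl⟩, hqg⟩
        rw [← QuotientGroup.eq_one_iff, QuotientGroup.mk_mul, hr_mk] at hqg
        rw [eq_inv_of_mul_eq_one_left hqg]

/-- A normal subgroup `H` of a finite group `G` is a perfect code of `G` iff
for every `g ∈ G` with `g² ∈ H` there exists `h ∈ H` with `(gh)² = e`. -/
theorem stmt1 {G : Type*} [Group G] [Fintype G] (H : Subgroup G) [H.Normal] :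
    (∃ S : Set G, (∀ s ∈ S, s⁻¹ ∈ S) ∧ (1 : G) ∉ S ∧
        IsPerfectCode S (H : Set G)) ↔
    (∀ g : G, g * g ∈ H → ∃ h ∈ H, (g * h) * (g * h) = 1) :=
  stmt1_general H
end

section
/- Let G be a finite group and H ≤ G a 2-group (|H| is a power of 2). Then H is a perfect code of G if and only if Φ(N_G(H), H) holds, i.e., for every g in the normalizer N_G(H) with g² ∈ H there exists h ∈ H with (gh)² = e. -/
/-!
Perfect codes `H` of `G` correspond to inverse-closed right transversals `T` of `H`
(via `S = T \ H`, and `T = S ∪ {1}`). If such a `T` exists and `g ∈ N_G(H)` has `g² ∈ H`, then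
`Hg = Hg⁻¹`, so the representative `t` of `Hg` satisfies `t⁻¹ = t`; this is `Φ(N_G(H), H)`.

Conversely, `T` is built by repeatedly taking `u` with `Hu` and `Hu⁻¹` uncovered and choosing the
representatives `u` and `u⁻¹` (allowed when `Hu = Hu⁻¹` only if `u² = 1`). Such a `u` exists in the
uncovered part `V` as long as `V` meets every double coset `D = HxH` and `D⁻¹` in equally many
elements, and meets `D = D⁻¹` in a multiple of `2|H|` when `x ∉ N_G(H)`. Both conditions survive
the removal of `Hu ∪ Hu⁻¹`. They hold for `V = G` because `HxH` is the union of an orbit of the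
`2`-group `H` on `G ⧸ H`, which is nontrivial when `x ∉ N_G(H)`. When every element of `V ∩ Hg⁻¹H`
lies in `Hg`, the counts force `g ∈ N_G(H)` and `g² ∈ H`, and `Φ` gives an involution in `Hg`.
-/

open DoubleCoset MulOpposite Pointwise Subgroup

section

variable {G : Type*} [Group G] {H : Subgroup G} {u x : G}

namespace DoubleCoset

lemma doubleCoset_inv (x : G) (H : Subgroup G) :
    doubleCoset x⁻¹ H H = (doubleCoset x H H)⁻¹ := by
  ext u
  simp only [Set.mem_inv, mem_doubleCoset, SetLike.mem_coe]
  constructor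
  · rintro ⟨a, ha, b, hb, rfl⟩
    exact ⟨b⁻¹, inv_mem hb, a⁻¹, inv_mem ha, by group⟩
  · rintro ⟨a, ha, b, hb, h⟩
    exact ⟨b⁻¹, inv_mem hb, a⁻¹, inv_mem ha, by rw [← inv_inv u, h]; group⟩

lemma rightCoset_subset_doubleCoset (hu : u ∈ doubleCoset x H H) :
    op u • (H : Set G) ⊆ doubleCoset x H H := by
  rw [← doubleCoset_eq_of_mem hu]
  intro y hy
  exact mem_doubleCoset.2 ⟨y * u⁻¹, (mem_rightCoset_iff u).1 hy, 1, one_mem H, by group⟩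

lemma ncard_rightCoset : (op u • (H : Set G)).ncard = Nat.card H := by
  rw [Set.ncard_smul_set, ← Nat.card_coe_set_eq, SetLike.coe_sort_coe]

open Classical in
lemma ncard_rightCoset_inter_doubleCoset :
    (op u • (H : Set G) ∩ doubleCoset x H H).ncard =
      if u ∈ doubleCoset x H H then Nat.card H else 0 := by
  split_ifs with hu
  · rw [Set.inter_eq_left.2 (rightCoset_subset_doubleCoset hu), ncard_rightCoset]
  · convert Set.ncard_empty G
    refine Set.eq_empty_of_forall_notMem fun y ⟨hyu, hyx⟩ => hu ?_
    rw [← doubleCoset_eq_of_mem hyx,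
      doubleCoset_eq_of_mem (rightCoset_subset_doubleCoset (mem_doubleCoset_self H H u) hyu)]
    exact mem_doubleCoset_self H H u

lemma doubleCoset_eq_rightCoset_of_mem_normalizer (hx : x ∈ normalizer (H : Set G)) :
    doubleCoset x H H = op x • (H : Set G) := by
  refine (Set.Subset.antisymm ?_ (rightCoset_subset_doubleCoset (mem_doubleCoset_self H H x)))
  intro y hy
  obtain ⟨a, ha, b, hb, rfl⟩ := mem_doubleCoset.1 hy
  rw [mem_rightCoset_iff, show a * x * b * x⁻¹ = a * (x * b * x⁻¹) by group]
  exact mul_mem ha ((mem_normalizer_iff.1 hx b).1 hb)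

lemma doubleCoset_eq_preimage_orbit (x : G) (H : Subgroup G) :
    doubleCoset x H H = QuotientGroup.mk ⁻¹' MulAction.orbit H (x : G ⧸ H) := by
  ext y
  simp only [mem_doubleCoset, Set.mem_preimage, MulAction.mem_orbit_iff, SetLike.mem_coe,
    Subtype.exists]
  constructor
  · rintro ⟨a, ha, b, hb, rfl⟩
    refine ⟨a, ha, QuotientGroup.eq.2 ?_⟩
    simpa [mul_assoc] using hb
  · rintro ⟨a, ha, hy⟩
    have hy : (a * x)⁻¹ * y ∈ H := QuotientGroup.eq.1 hy
    exact ⟨a, ha, _, hy, by group⟩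

lemma mem_doubleCoset_iff_doubleCoset_eq :
    u ∈ doubleCoset x H H ↔ doubleCoset u H H = doubleCoset x H H :=
  ⟨doubleCoset_eq_of_mem, fun h => h ▸ mem_doubleCoset_self H H u⟩

lemma mem_doubleCoset_inv : u ∈ doubleCoset x⁻¹ H H ↔ u⁻¹ ∈ doubleCoset x H H := by
  rw [doubleCoset_inv, Set.mem_inv]

end DoubleCoset

lemma IsPGroup.mul_card_dvd_ncard_doubleCoset {p : ℕ} [Fact p.Prime] [Finite G]
    (hH : IsPGroup p H) (hx : x ∉ normalizer (H : Set G)) :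
    p * Nat.card H ∣ (doubleCoset x H H).ncard := by
  obtain ⟨n, hn⟩ := hH.card_orbit (x : G ⧸ H)
  have hn0 : n ≠ 0 := by
    rintro rfl
    rw [pow_zero] at hn
    refine hx (Sylow.mem_fixedPoints_mul_left_cosets_iff_mem_normalizer.1 ?_)
    exact MulAction.subsingleton_orbit_iff_mem_fixedPoints.1
      (Set.subsingleton_coe _ |>.1 (Finite.card_le_one_iff_subsingleton.1 hn.le))
  rw [doubleCoset_eq_preimage_orbit, ← Nat.card_coe_set_eq, QuotientGroup.card_preimage_mk, hn,
    mul_comm]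
  exact mul_dvd_mul_left _ (dvd_pow_self p hn0)

structure IsInvClosedRightTransversal (H : Subgroup G) (V T : Set G) : Prop where
  subset : T ⊆ V
  inv_mem : ∀ t ∈ T, t⁻¹ ∈ T
  existsUnique : ∀ v ∈ V, ∃! t, t ∈ T ∧ t * v⁻¹ ∈ H

namespace IsInvClosedRightTransversal

lemma union {A V T₁ T₂ : Set G} (hA : ∀ h ∈ H, ∀ a ∈ A, h * a ∈ A) (hAV : A ⊆ V)
    (h₁ : IsInvClosedRightTransversal H A T₁) (h₂ : IsInvClosedRightTransversal H (V \ A) T₂) :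
    IsInvClosedRightTransversal H V (T₁ ∪ T₂) := by
  have mem_iff {t v : G} (htv : t * v⁻¹ ∈ H) : t ∈ A ↔ v ∈ A :=
    ⟨fun ht => by simpa using hA _ (H.inv_mem htv) t ht, fun hv => by simpa using hA _ htv v hv⟩
  refine ⟨Set.union_subset (h₁.subset.trans hAV) (h₂.subset.trans Set.sdiff_subset), ?_, ?_⟩
  · rintro t (ht | ht)
    exacts [Or.inl (h₁.inv_mem t ht), Or.inr (h₂.inv_mem t ht)]
  · intro v hv
    by_cases hvA : v ∈ A
    · obtain ⟨t, ⟨ht, htv⟩, huniq⟩ := h₁.existsUnique v hvA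
      refine ⟨t, ⟨Or.inl ht, htv⟩, fun t' ⟨ht', ht'v⟩ => ?_⟩
      rcases ht' with ht' | ht'
      · exact huniq t' ⟨ht', ht'v⟩
      · exact absurd ((mem_iff ht'v).2 hvA) (h₂.subset ht').2
    · obtain ⟨t, ⟨ht, htv⟩, huniq⟩ := h₂.existsUnique v ⟨hv, hvA⟩
      refine ⟨t, ⟨Or.inr ht, htv⟩, fun t' ⟨ht', ht'v⟩ => ?_⟩
      rcases ht' with ht' | ht'
      · exact absurd ((mem_iff ht'v).1 (h₁.subset ht')) hvA
      · exact huniq t' ⟨ht', ht'v⟩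

end IsInvClosedRightTransversal

def cosetPair (H : Subgroup G) (u : G) : Set G := op u • (H : Set G) ∪ op u⁻¹ • (H : Set G)

lemma mem_cosetPair {v : G} : v ∈ cosetPair H u ↔ v * u⁻¹ ∈ H ∨ v * u ∈ H := by
  simp only [cosetPair, Set.mem_union, mem_rightCoset_iff, inv_inv, SetLike.mem_coe]

lemma isInvClosedRightTransversal_cosetPair (hu : u * u ∈ H → u * u = 1) :
    IsInvClosedRightTransversal H (cosetPair H u) {u, u⁻¹} := by
  have hu' : u⁻¹ * u⁻¹ ∈ H → u⁻¹ = u := fun h => by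
    rw [← mul_inv_rev, inv_mem_iff] at h
    exact inv_eq_of_mul_eq_one_right (hu h)
  refine ⟨?_, ?_, ?_⟩
  · rintro t (rfl | rfl) <;> simp [mem_cosetPair]
  · rintro t (rfl | rfl) <;> simp
  · intro v hv
    rw [mem_cosetPair] at hv
    rcases hv with hv | hv
    · refine ⟨u, ⟨by simp, by simpa using inv_mem hv⟩, ?_⟩
      rintro t ⟨rfl | rfl, ht⟩
      · rfl
      · exact hu' (by simpa [mul_assoc] using mul_mem ht hv)
    · refine ⟨u⁻¹, ⟨by simp, by simpa using inv_mem hv⟩, ?_⟩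
      rintro t ⟨rfl | rfl, ht⟩
      · exact (hu' (by simpa [mul_assoc] using mul_mem (inv_mem hv) (inv_mem ht))).symm
      · rfl

lemma mul_mem_cosetPair_iff {h v : G} (hh : h ∈ H) : h * v ∈ cosetPair H u ↔ v ∈ cosetPair H u := by
  simp only [mem_cosetPair, mul_assoc, mul_mem_cancel_left hh]

lemma cosetPair_subset {V : Set G} (hV : ∀ h ∈ H, ∀ v ∈ V, h * v ∈ V) (hu : u ∈ V)
    (hu' : u⁻¹ ∈ V) : cosetPair H u ⊆ V := by
  intro v hv
  rcases mem_cosetPair.1 hv with hv | hv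
  · simpa using hV _ hv u hu
  · simpa using hV _ hv u⁻¹ hu'

lemma cosetPair_eq_of_mul_self_mem (hu : u * u ∈ H) : cosetPair H u = op u • (H : Set G) := by
  rw [cosetPair, (rightCoset_eq_iff H (x := u⁻¹) (y := u)).2 (by simpa using hu), Set.union_self]

open Classical in
lemma ncard_cosetPair_inter_doubleCoset_of_mul_self_notMem [Finite G] (hu : u * u ∉ H) :
    (cosetPair H u ∩ doubleCoset x H H).ncard =
      (if u ∈ doubleCoset x H H then Nat.card H else 0) +
        if u⁻¹ ∈ doubleCoset x H H then Nat.card H else 0 := by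
  have hdisj : Disjoint (op u • (H : Set G)) (op u⁻¹ • (H : Set G)) := by
    refine Set.disjoint_left.2 fun v hv hv' => hu ?_
    rw [mem_rightCoset_iff] at hv hv'
    simpa [mul_assoc] using mul_mem (inv_mem hv) hv'
  rw [cosetPair, Set.union_inter_distrib_right, Set.ncard_union_eq
    (hdisj.mono Set.inter_subset_left Set.inter_subset_left),
    ncard_rightCoset_inter_doubleCoset, ncard_rightCoset_inter_doubleCoset]

open Classical in
lemma ncard_cosetPair_inter_doubleCoset_inv [Finite G] :
    (cosetPair H u ∩ doubleCoset x⁻¹ H H).ncard = (cosetPair H u ∩ doubleCoset x H H).ncard := by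
  by_cases hu : u * u ∈ H
  · have hu' : doubleCoset u⁻¹ H H = doubleCoset u H H :=
      doubleCoset_eq_of_mem (mem_doubleCoset.2 ⟨u⁻¹ * u⁻¹, by simpa using inv_mem hu, 1, one_mem H,
        by group⟩)
    simp only [cosetPair_eq_of_mul_self_mem hu, ncard_rightCoset_inter_doubleCoset,
      mem_doubleCoset_inv, mem_doubleCoset_iff_doubleCoset_eq (u := u⁻¹), hu',
      ← mem_doubleCoset_iff_doubleCoset_eq]
  · rw [ncard_cosetPair_inter_doubleCoset_of_mul_self_notMem hu,
      ncard_cosetPair_inter_doubleCoset_of_mul_self_notMem hu, mem_doubleCoset_inv,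
      mem_doubleCoset_inv, inv_inv, add_comm]

lemma two_mul_card_dvd_ncard_cosetPair_inter_doubleCoset [Finite G]
    (hx : x ∉ normalizer (H : Set G)) (hxx : x⁻¹ ∈ doubleCoset x H H)
    (hu : u * u ∈ H → u ∈ normalizer (H : Set G)) :
    2 * Nat.card H ∣ (cosetPair H u ∩ doubleCoset x H H).ncard := by
  by_cases huu : u * u ∈ H
  · rw [cosetPair_eq_of_mul_self_mem huu, ncard_rightCoset_inter_doubleCoset, if_neg]
    · exact dvd_zero _
    intro hux
    have hxu : x ∈ op u • (H : Set G) := by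
      rw [← doubleCoset_eq_rightCoset_of_mem_normalizer (hu huu), doubleCoset_eq_of_mem hux]
      exact mem_doubleCoset_self H H x
    rw [mem_rightCoset_iff] at hxu
    exact hx (by simpa using mul_mem (le_normalizer hxu) (hu huu))
  · have hx' : u⁻¹ ∈ doubleCoset x H H ↔ u ∈ doubleCoset x H H := by
      rw [← mem_doubleCoset_inv, doubleCoset_eq_of_mem hxx]
    rw [ncard_cosetPair_inter_doubleCoset_of_mul_self_notMem huu, hx']
    split_ifs <;> simp [← two_mul]

structure IsBalanced (H : Subgroup G) (V : Set G) : Prop where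
  mul_mem : ∀ h ∈ H, ∀ v ∈ V, h * v ∈ V
  ncard_inter_doubleCoset_inv :
    ∀ x, (V ∩ doubleCoset x⁻¹ H H).ncard = (V ∩ doubleCoset x H H).ncard
  two_mul_card_dvd_ncard_inter_doubleCoset : ∀ x ∉ normalizer (H : Set G),
    x⁻¹ ∈ doubleCoset x H H → 2 * Nat.card H ∣ (V ∩ doubleCoset x H H).ncard

lemma isBalanced_univ [Finite G] (hH : IsPGroup 2 H) : IsBalanced H Set.univ where
  mul_mem _ _ _ _ := Set.mem_univ _
  ncard_inter_doubleCoset_inv x := by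
    rw [Set.univ_inter, Set.univ_inter, doubleCoset_inv, Set.ncard_inv]
  two_mul_card_dvd_ncard_inter_doubleCoset x hx _ := by
    rw [Set.univ_inter]
    exact hH.mul_card_dvd_ncard_doubleCoset hx

namespace IsBalanced

variable {V : Set G}

lemma diff_cosetPair [Finite G] (hV : IsBalanced H V) (huV : u ∈ V) (hu'V : u⁻¹ ∈ V)
    (hu : u * u ∈ H → u ∈ normalizer (H : Set G)) : IsBalanced H (V \ cosetPair H u) := by
  have ncard_diff (x : G) : ((V \ cosetPair H u) ∩ doubleCoset x H H).ncard =
      (V ∩ doubleCoset x H H).ncard - (cosetPair H u ∩ doubleCoset x H H).ncard := by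
    rw [Set.inter_sdiff_distrib_right, Set.ncard_sdiff
      (Set.inter_subset_inter_left _ (cosetPair_subset hV.mul_mem huV hu'V))]
  refine ⟨fun h hh v hv => ⟨hV.mul_mem h hh v hv.1, mt (mul_mem_cosetPair_iff hh).1 hv.2⟩,
    fun x => ?_, fun x hx hxx => ?_⟩
  · rw [ncard_diff, ncard_diff, hV.ncard_inter_doubleCoset_inv,
      ncard_cosetPair_inter_doubleCoset_inv]
  · rw [ncard_diff]
    exact Nat.dvd_sub (hV.two_mul_card_dvd_ncard_inter_doubleCoset x hx hxx)
      (two_mul_card_dvd_ncard_cosetPair_inter_doubleCoset hx hxx hu)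

lemma mem_normalizer_of_inter_subset [Finite G] (hV : IsBalanced H V) {g : G} (hg : g ∈ V)
    (hsub : V ∩ doubleCoset g⁻¹ H H ⊆ op g • (H : Set G)) :
    g ∈ normalizer (H : Set G) ∧ g * g ∈ H := by
  obtain ⟨y, hy⟩ : (V ∩ doubleCoset g⁻¹ H H).Nonempty := by
    rw [← Set.ncard_pos (Set.toFinite _), hV.ncard_inter_doubleCoset_inv]
    exact (Set.ncard_pos (Set.toFinite _)).2 ⟨g, hg, mem_doubleCoset_self H H g⟩
  have hD : doubleCoset g⁻¹ H H = doubleCoset g H H :=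
    (doubleCoset_eq_of_mem hy.2).symm.trans
      (doubleCoset_eq_of_mem (rightCoset_subset_doubleCoset (mem_doubleCoset_self H H g) (hsub hy)))
  have hN : g ∈ normalizer (H : Set G) := by
    by_contra hN
    have hdvd := hV.two_mul_card_dvd_ncard_inter_doubleCoset g hN
      (hD ▸ mem_doubleCoset_self H H g⁻¹)
    have hle : (V ∩ doubleCoset g H H).ncard ≤ Nat.card H := by
      rw [← hD, ← ncard_rightCoset (u := g)]
      exact Set.ncard_le_ncard hsub
    have hpos : 0 < (V ∩ doubleCoset g H H).ncard :=
      (Set.ncard_pos (Set.toFinite _)).2 ⟨g, hg, mem_doubleCoset_self H H g⟩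
    have := Nat.le_of_dvd hpos hdvd
    have : 0 < Nat.card H := Nat.card_pos
    omega
  refine ⟨hN, ?_⟩
  have hg' : g⁻¹ ∈ op g • (H : Set G) := by
    rw [← doubleCoset_eq_rightCoset_of_mem_normalizer hN, ← hD]
    exact mem_doubleCoset_self H H g⁻¹
  rw [mem_rightCoset_iff, ← mul_inv_rev] at hg'
  exact inv_mem_iff.1 hg'

lemma exists_mem_inv_mem [Finite G] (hV : IsBalanced H V)
    (hΦ : ∀ g ∈ normalizer (H : Set G), g * g ∈ H → ∃ h ∈ H, g * h * (g * h) = 1)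
    {g : G} (hg : g ∈ V) :
    ∃ u ∈ V, u⁻¹ ∈ V ∧ (u * u ∈ H → u ∈ normalizer (H : Set G) ∧ u * u = 1) := by
  by_cases hy : ∃ y ∈ V ∩ doubleCoset g⁻¹ H H, y * g⁻¹ ∉ H
  · obtain ⟨y, ⟨hyV, hyD⟩, hyg⟩ := hy
    obtain ⟨a, ha, b, hb, rfl⟩ := mem_doubleCoset.1 hyD
    -- `u = b⁻¹ g ∈ Hg` has `u⁻¹ = a⁻¹ y ∈ Hy`, and `Hy ≠ Hg` rules out `u² ∈ H`.
    refine ⟨b⁻¹ * g, hV.mul_mem _ (inv_mem hb) g hg, ?_, fun hu => absurd ?_ hyg⟩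
    · simpa [mul_assoc] using hV.mul_mem _ (inv_mem ha) _ hyV
    · convert H.mul_mem (H.mul_mem ha (H.inv_mem hu)) (H.inv_mem hb) using 1
      group
  · push Not at hy
    obtain ⟨hN, hgg⟩ := hV.mem_normalizer_of_inter_subset hg
      fun y hy' => (mem_rightCoset_iff g).2 (hy y hy')
    obtain ⟨h, hh, hgh⟩ := hΦ g hN hgg
    have hghV : g * h ∈ V := by
      simpa using hV.mul_mem _ ((mem_normalizer_iff.1 hN h).1 hh) g hg
    exact ⟨g * h, hghV, by rwa [inv_eq_of_mul_eq_one_right hgh],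
      fun _ => ⟨(normalizer _).mul_mem hN (le_normalizer hh), hgh⟩⟩

theorem exists_isInvClosedRightTransversal [Finite G] (hV : IsBalanced H V)
    (hΦ : ∀ g ∈ normalizer (H : Set G), g * g ∈ H → ∃ h ∈ H, g * h * (g * h) = 1) :
    ∃ T, IsInvClosedRightTransversal H V T := by
  induction V using WellFoundedLT.induction with
  | _ V ih =>
    rcases V.eq_empty_or_nonempty with rfl | ⟨g, hg⟩
    · exact ⟨∅, Set.empty_subset _, by simp, by simp⟩
    obtain ⟨u, huV, hu'V, hu⟩ := hV.exists_mem_inv_mem hΦ hg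
    have hsub := cosetPair_subset hV.mul_mem huV hu'V
    have hu_mem : u ∈ cosetPair H u := mem_cosetPair.2 (Or.inl (by simp))
    obtain ⟨T, hT⟩ := ih _ (Set.sdiff_ssubset_left_iff.2 ⟨u, huV, hu_mem⟩)
      (hV.diff_cosetPair huV hu'V fun h => (hu h).1)
    exact ⟨_, (isInvClosedRightTransversal_cosetPair fun h => (hu h).2).union
      (fun h hh v => (mul_mem_cosetPair_iff hh).2) hsub hT⟩

end IsBalanced

namespace IsInvClosedRightTransversal

variable {T : Set G}

lemma exists_mul_mul_self_eq_one (hT : IsInvClosedRightTransversal H Set.univ T) {g : G}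
    (hg : g ∈ normalizer (H : Set G)) (hgg : g * g ∈ H) : ∃ h ∈ H, g * h * (g * h) = 1 := by
  obtain ⟨t, ⟨htT, htg⟩, huniq⟩ := hT.existsUnique g trivial
  have ht : t⁻¹ = t := by
    refine huniq t⁻¹ ⟨hT.inv_mem t htT, ?_⟩
    have hconj := (mem_normalizer_iff''.1 hg _).1 (H.inv_mem htg)
    convert H.mul_mem hconj (H.inv_mem hgg) using 1
    group
  refine ⟨g⁻¹ * t, ?_, ?_⟩
  · simpa [mul_assoc] using (mem_normalizer_iff''.1 hg _).1 htg
  · rw [mul_inv_cancel_left, mul_eq_one_iff_eq_inv, ht]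

lemma isPerfectCode (hT : IsInvClosedRightTransversal H Set.univ T) :
    (∀ s ∈ T \ H, s⁻¹ ∈ T \ H) ∧ (1 : G) ∉ T \ H ∧ IsPerfectCode (T \ H) H := by
  refine ⟨fun s ⟨hsT, hsH⟩ => ⟨hT.inv_mem s hsT, by simpa using hsH⟩, fun h => h.2 (one_mem H),
    fun c hc c' hc' _ h => h.2 (H.mul_mem hc' (H.inv_mem hc)), fun g hg => ?_⟩
  obtain ⟨t, ⟨htT, htg⟩, huniq⟩ := hT.existsUnique g⁻¹ trivial
  rw [inv_inv] at htg
  refine ⟨t * g, ⟨htg, ?_, ?_⟩, ?_⟩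
  · simpa using htT
  · intro htH
    exact hg (by simpa using H.mul_mem (H.inv_mem htH) htg)
  · rintro c ⟨hc, hcT, -⟩
    rw [← huniq (c * g⁻¹) ⟨hcT, by simpa using hc⟩, inv_mul_cancel_right]

end IsInvClosedRightTransversal

lemma IsPerfectCode.isInvClosedRightTransversal_insert_one {S : Set G}
    (hS : ∀ s ∈ S, s⁻¹ ∈ S) (h1 : (1 : G) ∉ S) (hC : IsPerfectCode S H) :
    IsInvClosedRightTransversal H Set.univ (insert 1 S) := by
  refine ⟨Set.subset_univ _, ?_, fun g _ => ?_⟩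
  · rintro t (rfl | ht)
    exacts [by simp, Or.inr (hS t ht)]
  by_cases hg : g ∈ H
  · refine ⟨1, ⟨Set.mem_insert _ _, by simpa using H.inv_mem hg⟩, ?_⟩
    rintro t ⟨rfl | htS, htg⟩
    · rfl
    have htH : t ∈ H := by simpa using H.mul_mem htg hg
    exact absurd (by simpa using htS) (hC.1 1 (one_mem H) t htH (fun h => h1 (h ▸ htS)))
  · obtain ⟨c, ⟨hcH, hcS⟩, huniq⟩ := hC.2 g⁻¹ (fun h => hg (by simpa using H.inv_mem h))
    rw [inv_inv] at hcS
    refine ⟨c * g, ⟨Or.inr hcS, by simpa using hcH⟩, ?_⟩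
    rintro t ⟨rfl | htS, htg⟩
    · exact absurd (by simpa using H.inv_mem htg) hg
    · rw [← huniq (t * g⁻¹) ⟨htg, by simpa using htS⟩, inv_mul_cancel_right]

end

/-- A 2-subgroup `H` of a finite group `G` is a perfect code of `G` iff
`Φ(N_G(H), H)` holds. -/
theorem stmt2 {G : Type*} [Group G] [Fintype G] (H : Subgroup G)
    (h2 : ∃ k : ℕ, Nat.card H = 2 ^ k) :
    (∃ S : Set G, (∀ s ∈ S, s⁻¹ ∈ S) ∧ (1 : G) ∉ S ∧
        IsPerfectCode S (H : Set G)) ↔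
    (∀ g ∈ Subgroup.normalizer (H : Set G), g * g ∈ H → ∃ h ∈ H, (g * h) * (g * h) = 1) := by
  constructor
  · rintro ⟨S, hSinv, hS1, hS⟩ g hg hgg
    exact (hS.isInvClosedRightTransversal_insert_one hSinv hS1).exists_mul_mul_self_eq_one hg hgg
  · intro hΦ
    obtain ⟨k, hk⟩ := h2
    obtain ⟨T, hT⟩ := (isBalanced_univ (IsPGroup.of_card hk)).exists_isInvClosedRightTransversal hΦ
    exact ⟨T \ H, hT.isPerfectCode⟩
end

section
/- Let q = 2^n and α ∈ F_{q²} with α² = sα + t, s ∈ F_q, t ∈ F_q^*, and F_{q²} = F_q ⊕ F_q α. Let g = ((0, α+s)ᵀ, [[1, α],[0, 1]]) ∈ AGL(2,q²). Then for every h = ((u,v)ᵀ, I₂) with u, v ∈ F_q, one has (gh)² = ((vα + t, 0)ᵀ, I₂) ≠ (0, I₂). In particular, the condition Φ(AGL(2,q²), H_q) fails. -/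
/-! In characteristic 2 the matrix `A = [[1, α], [0, 1]]` is an involution and `w + A w = (α w₂, 0)`
for every `w`, so every affine map with linear part `A` squares to a translation along the first
axis. For `gh` we have `w₂ = α + s + v`, and `α (α + s + v) = vα + t` by `α² = sα + t`; this is
nonzero because `1, α` are linearly independent over `F` and `t ≠ 0`. -/

open Matrix

/-- The affine group `F² ⋊ GL₂(F)`: pairs `(v, m)` with multiplication
`(a, A)(b, B) = (a + Ab, AB)`. -/
@[ext]
structure Aff (F : Type*) [Field F] where
  v : Fin 2 → F
  m : GL (Fin 2) F

namespace Aff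

variable {F : Type*} [Field F]

instance : Mul (Aff F) :=
  ⟨fun g h => ⟨g.v + (g.m : Matrix (Fin 2) (Fin 2) F) *ᵥ h.v, g.m * h.m⟩⟩

instance : One (Aff F) := ⟨⟨0, 1⟩⟩

instance : Inv (Aff F) :=
  ⟨fun g => ⟨-(((g.m⁻¹ : GL (Fin 2) F) : Matrix (Fin 2) (Fin 2) F) *ᵥ g.v), g.m⁻¹⟩⟩

@[simp] lemma mul_v (g h : Aff F) :
    (g * h).v = g.v + (g.m : Matrix (Fin 2) (Fin 2) F) *ᵥ h.v := rfl
@[simp] lemma mul_m (g h : Aff F) : (g * h).m = g.m * h.m := rfl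
@[simp] lemma one_v : (1 : Aff F).v = 0 := rfl
@[simp] lemma one_m : (1 : Aff F).m = 1 := rfl
@[simp] lemma inv_v (g : Aff F) :
    (g⁻¹).v = -(((g.m⁻¹ : GL (Fin 2) F) : Matrix (Fin 2) (Fin 2) F) *ᵥ g.v) := rfl
@[simp] lemma inv_m (g : Aff F) : (g⁻¹).m = g.m⁻¹ := rfl

instance : Group (Aff F) where
  mul_assoc a b c := by
    ext : 1 <;>
      simp only [mul_v, mul_m, Matrix.mulVec_add, Matrix.mulVec_mulVec, add_assoc, Units.val_mul,
        mul_assoc]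
  one_mul a := by ext : 1 <;> simp
  mul_one a := by ext : 1 <;> simp
  inv_mul_cancel a := by
    ext : 1 <;> simp [Matrix.mulVec_mulVec, ← Units.val_mul]

end Aff

/-- The subgroup `H_q` of translations by vectors with entries in the subfield. -/
def Hq (F K : Type*) [Field F] [Field K] [Algebra F K] : Set (Aff K) :=
  {g : Aff K | (∀ i, g.v i ∈ Set.range (algebraMap F K)) ∧ g.m = 1}

section CharTwo

variable {K : Type*} [Field K] [CharP K 2]

lemma unitriangular_mul_self (c : K) : !![1, c; 0, 1] * !![1, c; 0, 1] = 1 := by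
  rw [Matrix.mul_fin_two, Matrix.one_fin_two]
  simp [CharTwo.add_self_eq_zero]

lemma add_unitriangular_mulVec (c : K) (w : Fin 2 → K) :
    w + !![1, c; 0, 1] *ᵥ w = ![c * w 1, 0] := by
  ext i
  fin_cases i <;> simp [dotProduct, Fin.sum_univ_two, ← add_assoc,
    CharTwo.add_self_eq_zero]

lemma Aff.mul_self_of_unitriangular {c : K} (x : Aff K)
    (hx : (x.m : Matrix (Fin 2) (Fin 2) K) = !![1, c; 0, 1]) :
    x * x = ⟨![c * x.v 1, 0], 1⟩ := by
  ext : 1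
  · rw [Aff.mul_v, hx, add_unitriangular_mulVec]
  · exact Units.ext (by rw [Aff.mul_m, Units.val_mul, hx, unitriangular_mul_self]; rfl)

end CharTwo

lemma Aff.translation_ne_one {K : Type*} [Field K] {a : K} (ha : a ≠ 0) :
    (⟨![a, 0], 1⟩ : Aff K) ≠ 1 :=
  fun h => ha (congrFun (congrArg Aff.v h) 0)

lemma mem_Hq_iff {F K : Type*} [Field F] [Field K] [Algebra F K] (h : Aff K) :
    h ∈ Hq F K ↔ ∃ u v : F, h = ⟨![algebraMap F K u, algebraMap F K v], 1⟩ := by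
  constructor
  · rintro ⟨hv, hm⟩
    obtain ⟨u, hu⟩ := hv 0
    obtain ⟨v, hv⟩ := hv 1
    refine ⟨u, v, Aff.ext ?_ hm⟩
    ext i
    fin_cases i <;> simp [hu, hv]
  · rintro ⟨u, v, rfl⟩
    refine ⟨fun i => ?_, rfl⟩
    fin_cases i
    exacts [⟨u, rfl⟩, ⟨v, rfl⟩]

lemma algebraMap_mul_add_algebraMap_ne_zero {F K : Type*} [Field F] [Field K] [Algebra F K]
    {α : K} (hα : α ∉ Set.range (algebraMap F K)) (v : F) {t : F} (ht : t ≠ 0) :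
    algebraMap F K v * α + algebraMap F K t ≠ 0 := by
  intro h
  by_cases hv : v = 0
  · exact ht (by simpa [hv] using h)
  · refine hα ⟨-(t / v), ?_⟩
    have hv' : algebraMap F K v ≠ 0 := by simpa using hv
    rw [map_neg, map_div₀]
    field_simp
    linear_combination -h

theorem stmt5_general {F K : Type*} [Field F] [Field K] [Algebra F K] [Fintype F]
    (n : ℕ) (hF : Fintype.card F = 2 ^ n)
    (α : K) (hα : α ∉ Set.range (algebraMap F K))
    (s : F) (t : F) (ht : t ≠ 0)
    (hα2 : α ^ 2 = algebraMap F K s * α + algebraMap F K t)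
    (A : GL (Fin 2) K)
    (hA : (A : Matrix (Fin 2) (Fin 2) K) = !![1, α; 0, 1])
    (g : Aff K) (hg : g = ⟨![0, α + algebraMap F K s], A⟩) :
    (∀ u v : F, ∀ h : Aff K, h = ⟨![algebraMap F K u, algebraMap F K v], 1⟩ →
        (g * h) * (g * h) = ⟨![algebraMap F K v * α + algebraMap F K t, 0], 1⟩ ∧
        (g * h) * (g * h) ≠ 1) ∧
    ∃ x : Aff K, x * x ∈ Hq F K ∧ ∀ h ∈ Hq F K, (x * h) * (x * h) ≠ 1 := by
  have : CharP F 2 := charP_of_card_eq_prime_pow hF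
  have : CharP K 2 := charP_of_injective_algebraMap (algebraMap F K).injective 2
  have square : ∀ u v : F, ∀ h : Aff K, h = ⟨![algebraMap F K u, algebraMap F K v], 1⟩ →
      (g * h) * (g * h) = ⟨![algebraMap F K v * α + algebraMap F K t, 0], 1⟩ := by
    intro u v h hh
    have hm : ((g * h).m : Matrix (Fin 2) (Fin 2) K) = !![1, α; 0, 1] := by simp [hg, hh, hA]
    have hv : (g * h).v 1 = α + algebraMap F K s + algebraMap F K v := by
      simp [hg, hh, hA, Algebra.algebraMap_eq_smul_one]
    rw [Aff.mul_self_of_unitriangular _ hm, hv]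
    congr 3
    linear_combination hα2 + algebraMap F K s * α * CharTwo.two_eq_zero (R := K)
  have square_ne_one : ∀ u v : F, ∀ h : Aff K,
      h = ⟨![algebraMap F K u, algebraMap F K v], 1⟩ → (g * h) * (g * h) ≠ 1 := fun u v h hh => by
    rw [square u v h hh]
    exact Aff.translation_ne_one (algebraMap_mul_add_algebraMap_ne_zero hα v ht)
  refine ⟨fun u v h hh => ⟨square u v h hh, square_ne_one u v h hh⟩, g, ?_, ?_⟩
  · have hg2 := square 0 0 1 (Aff.ext (by ext i; fin_cases i <;> simp) rfl)
    rw [mul_one] at hg2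
    exact (mem_Hq_iff _).2 ⟨t, 0, by simpa using hg2⟩
  · intro h hh
    obtain ⟨u, v, rfl⟩ := (mem_Hq_iff h).1 hh
    exact square_ne_one u v _ rfl

/-- For `g = ((0, α+s)ᵀ, [[1,α],[0,1]])` and every `h = ((u,v)ᵀ, I₂)` with
`u, v ∈ F_q`, one has `(gh)² = ((vα + t, 0)ᵀ, I₂) ≠ 1`. In particular
`Φ(AGL(2,q²), H_q)` fails. -/
theorem stmt5 {F K : Type*} [Field F] [Field K] [Algebra F K] [Fintype F]
    (n : ℕ) (hn : 1 ≤ n) (hF : Fintype.card F = 2 ^ n)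
    (hK : Module.finrank F K = 2)
    (α : K) (hα : α ∉ Set.range (algebraMap F K))
    (s : F) (t : F) (ht : t ≠ 0)
    (hα2 : α ^ 2 = algebraMap F K s * α + algebraMap F K t)
    (A : GL (Fin 2) K)
    (hA : (A : Matrix (Fin 2) (Fin 2) K) = !![1, α; 0, 1])
    (g : Aff K) (hg : g = ⟨![0, α + algebraMap F K s], A⟩) :
    (∀ u v : F, ∀ h : Aff K, h = ⟨![algebraMap F K u, algebraMap F K v], 1⟩ →
        (g * h) * (g * h) = ⟨![algebraMap F K v * α + algebraMap F K t, 0], 1⟩ ∧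
        (g * h) * (g * h) ≠ 1) ∧
    ∃ x : Aff K, x * x ∈ Hq F K ∧ ∀ h ∈ Hq F K, (x * h) * (x * h) ≠ 1 :=
  stmt5_general n hF α hα s t ht hα2 A hA g hg
end

section
/- There exists a finite group G and a non-normal subgroup H ≤ G such that H is a subgroup perfect code of G but the condition Φ(G,H) fails; i.e., there exists g ∈ G with g² ∈ H and (gh)² ≠ e for all h ∈ H. (For instance G = AGL(2,4), H = H_2 with q = 2.) -/
/-- `H` is a subgroup perfect code of `G`. -/
def IsSubgroupPerfectCode {G : Type*} [Group G] (H : Subgroup G) : Prop :=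
  ∃ S : Set G, (∀ s ∈ S, s⁻¹ ∈ S) ∧ (1 : G) ∉ S ∧ IsPerfectCode S (H : Set G)

/-- The condition `Φ(G, H)` fails: some `g ∈ G` has `g² ∈ H` but `(gh)² ≠ e`
for all `h ∈ H`. -/
def PhiFails {G : Type*} [Group G] (H : Subgroup G) : Prop :=
  ∃ g : G, g * g ∈ H ∧ ∀ h ∈ H, (g * h) * (g * h) ≠ 1

open Subgroup QuaternionGroup

section Complement

variable {G : Type*} [Group G]

theorem Subgroup.IsComplement.eq_one_of_mem_of_mem {S T : Set G} (hST : IsComplement S T)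
    (hS : 1 ∈ S) (hT : 1 ∈ T) {x : G} (hxS : x ∈ S) (hxT : x ∈ T) : x = 1 := by
  have := hST.1 (a₁ := (⟨x, hxS⟩, ⟨1, hT⟩)) (a₂ := (⟨1, hS⟩, ⟨x, hxT⟩)) (by simp)
  simpa using congrArg (fun p => (p.1 : G)) this

theorem isSubgroupPerfectCode_of_isComplement {H : Subgroup G} {T : Set G}
    (hT : IsComplement (H : Set G) T) (h1 : 1 ∈ T) (hinv : ∀ t ∈ T, t⁻¹ ∈ T) :
    IsSubgroupPerfectCode H := by
  refine ⟨T \ {1}, fun t ht => ⟨hinv t ht.1, by simpa using ht.2⟩, fun h => h.2 rfl, ?_, ?_⟩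
  · rintro c hc c' hc' - ⟨hT', hne⟩
    exact hne (hT.eq_one_of_mem_of_mem H.one_mem h1 (H.mul_mem hc' (H.inv_mem hc)) hT')
  · intro g hg
    -- the neighbours `c ∈ H` of `g` correspond to the decompositions `g⁻¹ = c⁻¹ * (c * g⁻¹)`
    obtain ⟨⟨⟨h, hh⟩, ⟨t, ht⟩⟩, heq : h * t = g⁻¹, huniq⟩ := hT.existsUnique g⁻¹
    have hcoset : h⁻¹ * g⁻¹ = t := by rw [← heq, inv_mul_cancel_left]
    refine ⟨h⁻¹, ⟨H.inv_mem hh, hcoset ▸ ht, ?_⟩, ?_⟩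
    · intro hone
      rw [Set.mem_singleton_iff, inv_mul_eq_one] at hone
      exact hg (by simpa [hone] using hh)
    · rintro c ⟨hc, hcT, -⟩
      have := huniq (⟨c⁻¹, H.inv_mem hc⟩, ⟨c * g⁻¹, hcT⟩) (by simp)
      simpa using congrArg (fun p => (p.1 : G)⁻¹) this

end Complement

theorem MonoidHom.isComplement'_graph_ker_fst {A B : Type*} [Group A] [Group B] (f : A →* B) :
    f.graph.IsComplement' (MonoidHom.fst A B).ker := by
  refine isComplement'_of_disjoint_and_mul_eq_univ ?_ ?_
  · rw [Subgroup.disjoint_def]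
    rintro ⟨x, y⟩ hgraph (rfl : x = 1)
    exact Prod.ext rfl (by simpa [MonoidHom.mem_graph, eq_comm] using hgraph)
  · refine Set.eq_univ_of_forall fun p => ⟨(p.1, f p.1), rfl, (1, (f p.1)⁻¹ * p.2), rfl, ?_⟩
    simp

namespace QuaternionGroup

variable {n : ℕ}

def aHom (n : ℕ) : Multiplicative (ZMod (2 * n)) →* QuaternionGroup n where
  toFun k := a k.toAdd
  map_one' := rfl
  map_mul' _ _ := (a_mul_a _ _).symm

theorem aHom_apply (k : Multiplicative (ZMod (2 * n))) : aHom n k = a k.toAdd := rfl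

theorem xa_inv (i : ZMod (2 * n)) : (xa i)⁻¹ = xa ((n : ZMod (2 * n)) + i) := rfl

theorem xa_mul_xa_ne_one [NeZero n] (i : ZMod (2 * n)) : xa i * xa i ≠ 1 := by
  intro h
  have := orderOf_dvd_of_pow_eq_one (sq (xa i) ▸ h)
  rw [orderOf_xa] at this
  norm_num at this

theorem not_normal_graph_aHom (hn : 1 < n) : ¬ (aHom n).graph.Normal := by
  intro h
  have hconj := MonoidHom.mem_graph.mp (h.conj_mem (Multiplicative.ofAdd 1, a 1) rfl (1, xa 0))
  simp only [Prod.mk_mul_mk, Prod.inv_mk, one_mul, inv_one, mul_one, aHom_apply, toAdd_ofAdd,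
    xa_mul_a, xa_inv, xa_mul_xa, a.injEq] at hconj
  have h2n : (2 * n : ZMod (2 * n)) = 0 := by exact_mod_cast ZMod.natCast_self (2 * n)
  have : Fact (2 < 2 * n) := ⟨by omega⟩
  exact ZMod.neg_one_ne_one (by linear_combination -hconj - h2n)

theorem phiFails_graph_aHom [NeZero n] (hn : Even n) : PhiFails (aHom n).graph := by
  obtain ⟨m, rfl⟩ := hn
  refine ⟨(Multiplicative.ofAdd (m : ZMod (2 * (m + m))), xa 0), MonoidHom.mem_graph.mpr ?_, ?_⟩
  · simp [aHom_apply]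
  rintro ⟨k, _⟩ (rfl : aHom _ k = _) hsq
  refine xa_mul_xa_ne_one (0 + k.toAdd) ?_
  simpa only [Prod.snd_mul, aHom_apply, xa_mul_a, Prod.snd_one] using congrArg Prod.snd hsq

end QuaternionGroup

/-- There exist a finite group `G` and a non-normal subgroup `H ≤ G` such that
`H` is a subgroup perfect code of `G` but `Φ(G, H)` fails. -/
theorem stmt13 :
    ∃ (G : Type) (iG : Group G), Finite G ∧
      ∃ H : @Subgroup G iG, ¬ @Subgroup.Normal G iG H ∧
        @IsSubgroupPerfectCode G iG H ∧ @PhiFails G iG H :=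
  ⟨_, inferInstance, inferInstance, (aHom 2).graph, not_normal_graph_aHom one_lt_two,
    isSubgroupPerfectCode_of_isComplement (aHom 2).isComplement'_graph_ker_fst
      (Subgroup.one_mem _) fun _ => Subgroup.inv_mem _,
    phiFails_graph_aHom even_two⟩
end
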